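/- arXiv:2501.09013 — 5 statements merged into one kernel-verified Lean document; each statement's English description precedes it below -/
import Mathlib

section
/- Let F = [F₁ F₂] be an n×k matrix with full row rank, where F₁ is n×s and F₂ is n×(k−s), and let H be an n×s matrix. There exists an n×(k−s) matrix G₂ such that G = [H G₂] satisfies FG* = I_n if and only if every column of I_n − F₁H* lies in the column span of F₂. -/
open Matrix

namespace Matrix

variable {R : Type*} {l m n p : Type*} [Fintype n]

theorem fromCols_mul_conjTranspose_fromCols [Semiring R] [StarRing R] [Fintype m]
    (A₁ : Matrix l n R) (A₂ : Matrix l m R) (B₁ : Matrix p n R) (B₂ : Matrix p m R) :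
    fromCols A₁ A₂ * (fromCols B₁ B₂)ᴴ = A₁ * B₁ᴴ + A₂ * B₂ᴴ := by
  rw [conjTranspose_fromCols_eq_fromRows_conjTranspose, fromCols_mul_fromRows]

theorem exists_mul_eq_iff_col_mem_span [CommSemiring R] (A : Matrix m n R) (B : Matrix m p R) :
    (∃ X : Matrix n p R, A * X = B) ↔ ∀ j, B.col j ∈ Submodule.span R (Set.range A.col) := by
  simp only [← range_mulVecLin, LinearMap.mem_range, mulVecLin_apply]
  constructor
  · rintro ⟨X, rfl⟩ j
    exact ⟨X.col j, by ext i; simp [mulVec, mul_apply, dotProduct]⟩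
  · intro h
    choose x hx using h
    refine ⟨(of x)ᵀ, ?_⟩
    ext i j
    simpa [mulVec, mul_apply, dotProduct] using congrFun (hx j) i

end Matrix

theorem dual_frame_completion_direct_general
    {𝕜 : Type*} [RCLike 𝕜] {n s m : ℕ}
    (F₁ : Matrix (Fin n) (Fin s) 𝕜) (F₂ : Matrix (Fin n) (Fin m) 𝕜)
    (H : Matrix (Fin n) (Fin s) 𝕜) :
    (∃ G₂ : Matrix (Fin n) (Fin m) 𝕜,
        fromCols F₁ F₂ * (fromCols H G₂)ᴴ = 1) ↔
      ∀ j : Fin n, (fun i => ((1 : Matrix (Fin n) (Fin n) 𝕜) - F₁ * Hᴴ) i j) ∈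
        Submodule.span 𝕜 (Set.range fun c => (fun i => F₂ i c)) := by
  calc (∃ G₂ : Matrix (Fin n) (Fin m) 𝕜, fromCols F₁ F₂ * (fromCols H G₂)ᴴ = 1)
      ↔ ∃ X, F₂ * X = 1 - F₁ * Hᴴ := by
        simp only [fromCols_mul_conjTranspose_fromCols, eq_sub_iff_add_eq']
        exact ⟨fun ⟨G₂, hG⟩ => ⟨G₂ᴴ, hG⟩,
          fun ⟨X, hX⟩ => ⟨Xᴴ, by rwa [conjTranspose_conjTranspose]⟩⟩
    _ ↔ _ := exists_mul_eq_iff_col_mem_span F₂ _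

/-- There exists `G₂` with `[F₁ F₂][H G₂]ᴴ = 1` iff every column of `1 - F₁ Hᴴ`
lies in the column span of `F₂`. -/
theorem dual_frame_completion_direct
    {𝕜 : Type*} [RCLike 𝕜] {n s m : ℕ}
    (F₁ : Matrix (Fin n) (Fin s) 𝕜) (F₂ : Matrix (Fin n) (Fin m) 𝕜)
    (hF : (fromCols F₁ F₂).rank = n)
    (H : Matrix (Fin n) (Fin s) 𝕜) :
    (∃ G₂ : Matrix (Fin n) (Fin m) 𝕜,
        fromCols F₁ F₂ * (fromCols H G₂)ᴴ = 1) ↔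
      ∀ j : Fin n, (fun i => ((1 : Matrix (Fin n) (Fin n) 𝕜) - F₁ * Hᴴ) i j) ∈
        Submodule.span 𝕜 (Set.range fun c => (fun i => F₂ i c)) :=
  dual_frame_completion_direct_general F₁ F₂ H
end

section
/- Let F be an n×k full-row-rank matrix and P an invertible k×k matrix with P F* = [I_n; 0]. Write P in block form with P₁₁ = P_{n×s} (top-left n×s block) and P₂₁ = P_{(k−n)×s} (bottom-left (k−n)×s block). Given an n×s matrix H with s ≤ k − n, there exists a dual frame G of F whose first s columns equal H if and only if every column of H* − P₁₁* lies in the column span of P₂₁*. -/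
/-! Every left inverse `G` of `Fᴴ` has the form `G = [1 A] * P`: write `G = (G * Q) * P`, and
note that the first block of `G * Q` is `G * Fᴴ = 1` because `P * Fᴴ = [1; 0]`. The first `s`
columns of `[1 A] * P` are `P₁₁ + A * P₂₁`, so the completion problem is the linear system
`P₂₁ᴴ * Aᴴ = Hᴴ - P₁₁ᴴ`, solvable exactly when every column of the right-hand side lies in the
column span of `P₂₁ᴴ`. -/

open Matrix

namespace Matrix

variable {R : Type*} {k l m n p : Type*}

theorem toCols₁_fromCols_mul [NonUnitalNonAssocSemiring R] [Fintype m] [Fintype n]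
    (B₁ : Matrix l n R) (B₂ : Matrix l m R) (P : Matrix (n ⊕ m) (k ⊕ p) R) :
    (fromCols B₁ B₂ * P).toCols₁ = B₁ * P.toBlocks₁₁ + B₂ * P.toBlocks₂₁ := by
  ext i j
  simp [mul_apply, Fintype.sum_sum_type, toBlocks₁₁, toBlocks₂₁]

theorem mul_eq_one_iff_exists_fromCols_one_mul_eq [Ring R] [Fintype k] [Fintype m] [Fintype n]
    [DecidableEq k] [DecidableEq n]
    (E : Matrix k n R) (P : Matrix (n ⊕ m) k R) (Q : Matrix k (n ⊕ m) R)
    (hQP : Q * P = 1) (hP : P * E = fromRows 1 0) (G : Matrix n k R) :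
    G * E = 1 ↔ ∃ A : Matrix n m R, fromCols (1 : Matrix n n R) A * P = G := by
  constructor
  · intro hG
    have hGQ : G * Q = fromCols (G * Q).toCols₁ (G * Q).toCols₂ := (fromCols_toCols _).symm
    have hGQ₁ : (G * Q).toCols₁ = 1 := by
      calc (G * Q).toCols₁ = G * Q * (P * E) := by
            rw [hP, hGQ, fromCols_mul_fromRows]
            simp
        _ = 1 := by rw [← Matrix.mul_assoc, Matrix.mul_assoc G, hQP, Matrix.mul_one, hG]
    refine ⟨(G * Q).toCols₂, ?_⟩
    rw [← hGQ₁, ← hGQ, Matrix.mul_assoc, hQP, Matrix.mul_one]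
  · rintro ⟨A, rfl⟩
    rw [Matrix.mul_assoc, hP, fromCols_mul_fromRows]
    simp

theorem exists_mul_eq_iff_forall_col_mem_span [CommSemiring R] [Fintype m] (X : Matrix l m R)
    (Y : Matrix l n R) :
    (∃ Z : Matrix m n R, X * Z = Y) ↔
      ∀ j, (fun i => Y i j) ∈ Submodule.span R (Set.range fun c i => X i c) := by
  simp only [Submodule.mem_span_range_iff_exists_fun]
  have hcol : ∀ (Z : Matrix m n R) j, ∑ c, Z c j • (fun i => X i c) = fun i => (X * Z) i j := by
    intro Z j
    ext i
    simp [mul_apply, mul_comm]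
  constructor
  · rintro ⟨Z, rfl⟩ j
    exact ⟨fun c => Z c j, hcol Z j⟩
  · intro h
    choose Z hZ using h
    refine ⟨of fun c j => Z j c, ?_⟩
    ext i j
    exact (congrFun (hcol _ j) i).symm.trans (congrFun (hZ j) i)

end Matrix

theorem dual_frame_completion_indirect_general
    {𝕜 : Type*} [RCLike 𝕜] {n m s t : ℕ}
    (F : Matrix (Fin n) (Fin s ⊕ Fin t) 𝕜)
    (P : Matrix (Fin n ⊕ Fin m) (Fin s ⊕ Fin t) 𝕜)
    (Q : Matrix (Fin s ⊕ Fin t) (Fin n ⊕ Fin m) 𝕜)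
    (hQP : Q * P = 1)
    (hP : P * Fᴴ = fromRows (1 : Matrix (Fin n) (Fin n) 𝕜) (0 : Matrix (Fin m) (Fin n) 𝕜))
    (H : Matrix (Fin n) (Fin s) 𝕜) :
    (∃ G : Matrix (Fin n) (Fin s ⊕ Fin t) 𝕜,
        F * Gᴴ = 1 ∧ ∀ i j, G i (Sum.inl j) = H i j) ↔
      ∀ j : Fin n, (fun i => (Hᴴ - (P.toBlocks₁₁)ᴴ) i j) ∈
        Submodule.span 𝕜 (Set.range fun c => (fun i => ((P.toBlocks₂₁)ᴴ) i c)) := by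
  have hdual (G : Matrix (Fin n) (Fin s ⊕ Fin t) 𝕜) :
      F * Gᴴ = 1 ↔
        ∃ A : Matrix (Fin n) (Fin m) 𝕜, fromCols (1 : Matrix (Fin n) (Fin n) 𝕜) A * P = G := by
    rw [← conjTranspose_inj, conjTranspose_mul, conjTranspose_conjTranspose, conjTranspose_one]
    exact mul_eq_one_iff_exists_fromCols_one_mul_eq Fᴴ P Q hQP hP G
  rw [← exists_mul_eq_iff_forall_col_mem_span]
  calc (∃ G : Matrix (Fin n) (Fin s ⊕ Fin t) 𝕜, F * Gᴴ = 1 ∧ ∀ i j, G i (Sum.inl j) = H i j)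
      ↔ ∃ A : Matrix (Fin n) (Fin m) 𝕜,
          (fromCols (1 : Matrix (Fin n) (Fin n) 𝕜) A * P).toCols₁ = H := by
        simp only [hdual, exists_exists_eq_and, ← toCols₁_apply, Matrix.ext_iff]
    _ ↔ ∃ A : Matrix (Fin n) (Fin m) 𝕜, P.toBlocks₁₁ + A * P.toBlocks₂₁ = H := by
        simp only [toCols₁_fromCols_mul, Matrix.one_mul]
    _ ↔ ∃ Z : Matrix (Fin m) (Fin n) 𝕜, P.toBlocks₂₁ᴴ * Z = Hᴴ - P.toBlocks₁₁ᴴ := by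
        constructor
        · rintro ⟨A, rfl⟩
          exact ⟨Aᴴ, by simp [conjTranspose_mul]⟩
        · rintro ⟨Z, hZ⟩
          refine ⟨Zᴴ, ?_⟩
          rw [← conjTranspose_inj, conjTranspose_add, conjTranspose_mul,
            conjTranspose_conjTranspose, hZ, add_sub_cancel]

/-- Dual frame completion via the product matrix `P`: there exists a dual frame `G` of `F`
whose first `s` columns equal `H` iff every column of `Hᴴ - P₁₁ᴴ` lies in the column span
of `P₂₁ᴴ`. -/
theorem dual_frame_completion_indirect
    {𝕜 : Type*} [RCLike 𝕜] {n m s t : ℕ}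
    (F : Matrix (Fin n) (Fin s ⊕ Fin t) 𝕜)
    (hF : F.rank = n)
    (P : Matrix (Fin n ⊕ Fin m) (Fin s ⊕ Fin t) 𝕜)
    (Q : Matrix (Fin s ⊕ Fin t) (Fin n ⊕ Fin m) 𝕜)
    (hPQ : P * Q = 1) (hQP : Q * P = 1)
    (hP : P * Fᴴ = fromRows (1 : Matrix (Fin n) (Fin n) 𝕜) (0 : Matrix (Fin m) (Fin n) 𝕜))
    (hs : s ≤ m)
    (H : Matrix (Fin n) (Fin s) 𝕜) :
    (∃ G : Matrix (Fin n) (Fin s ⊕ Fin t) 𝕜,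
        F * Gᴴ = 1 ∧ ∀ i j, G i (Sum.inl j) = H i j) ↔
      ∀ j : Fin n, (fun i => (Hᴴ - (P.toBlocks₁₁)ᴴ) i j) ∈
        Submodule.span 𝕜 (Set.range fun c => (fun i => ((P.toBlocks₂₁)ᴴ) i c)) :=
  dual_frame_completion_indirect_general F P Q hQP hP H
end

section
/- Let F be an n×k full-row-rank matrix, P invertible k×k with P F* = [I_n; 0], and s = k − n. If the bottom-left (k−n)×(k−n) block P₂₁ of P is invertible, then for any n×(k−n) matrix H there is exactly one dual frame G of F whose first k−n columns equal H; it is given by G = [I_n A]P with A = (H − P₁₁)P₂₁⁻¹, where P₁₁ is the top-left n×(k−n) block of P. -/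
open Matrix

/-!
Since `P Fᴴ = [1; 0]`, for every block row `[X Y]` we get `F ([X Y] P)ᴴ = Xᴴ`. Writing an arbitrary
`G` as `(G P⁻¹) P` therefore shows that the dual frames of `F` are exactly the matrices `[1 A] P`.
The first block of columns of `[1 A] P` is `P₁₁ + A P₂₁`, which equals `H` for exactly one `A`
when `P₂₁` is invertible.
-/

namespace Matrix

variable {R : Type*} {k m n m₁ m₂ n₁ n₂ : Type*}

theorem toCols₁_fromCols_mul_s11 [Semiring R] [Fintype m₁] [Fintype m₂]
    (A₁ : Matrix m m₁ R) (A₂ : Matrix m m₂ R) (P : Matrix (m₁ ⊕ m₂) (n₁ ⊕ n₂) R) :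
    (fromCols A₁ A₂ * P).toCols₁ = A₁ * P.toBlocks₁₁ + A₂ * P.toBlocks₂₁ := by
  rw [← fromBlocks_toBlocks P, fromCols_mul_fromBlocks, toCols₁_fromCols]
  simp only [toBlocks_fromBlocks₁₁, toBlocks_fromBlocks₂₁]

section DualFrame

variable [Semiring R] [StarRing R] [Fintype k] [Fintype m] [Fintype n] [DecidableEq n]
  {F : Matrix n k R} {P : Matrix (n ⊕ m) k R}

theorem mul_conjTranspose_fromCols_mul
    (hP : P * Fᴴ = fromRows (1 : Matrix n n R) (0 : Matrix m n R))
    (X : Matrix n n R) (Y : Matrix n m R) :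
    F * (fromCols X Y * P)ᴴ = Xᴴ := by
  have hFP : F * Pᴴ = fromCols (1 : Matrix n n R) (0 : Matrix n m R) := by
    simpa [conjTranspose_mul, conjTranspose_fromRows_eq_fromCols_conjTranspose] using
      congrArg conjTranspose hP
  rw [conjTranspose_mul, ← Matrix.mul_assoc, hFP,
    conjTranspose_fromCols_eq_fromRows_conjTranspose, fromCols_mul_fromRows]
  simp

theorem mul_conjTranspose_eq_one_iff [DecidableEq k] {Q : Matrix k (n ⊕ m) R}
    (hQP : Q * P = 1) (hP : P * Fᴴ = fromRows (1 : Matrix n n R) (0 : Matrix m n R))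
    (G : Matrix n k R) :
    F * Gᴴ = 1 ↔ ∃ A : Matrix n m R, G = fromCols (1 : Matrix n n R) A * P := by
  constructor
  · intro hG
    have hGQP : G = fromCols (G * Q).toCols₁ (G * Q).toCols₂ * P := by
      rw [fromCols_toCols, Matrix.mul_assoc, hQP, Matrix.mul_one]
    have hleft : (G * Q).toCols₁ = 1 := by
      rw [← conjTranspose_eq_one, ← mul_conjTranspose_fromCols_mul hP _ (G * Q).toCols₂, ← hGQP,
        hG]
    exact ⟨(G * Q).toCols₂, hleft ▸ hGQP⟩
  · rintro ⟨A, rfl⟩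
    rw [mul_conjTranspose_fromCols_mul hP, conjTranspose_one]

end DualFrame

theorem add_mul_eq_iff_eq_sub_mul_inv [CommRing R] [Fintype n] [DecidableEq n]
    {B : Matrix n n R} (hB : IsUnit B.det) (A C H : Matrix m n R) :
    C + A * B = H ↔ A = (H - C) * B⁻¹ := by
  constructor
  · rintro rfl
    rw [add_sub_cancel_left, mul_nonsing_inv_cancel_right _ _ hB]
  · rintro rfl
    rw [nonsing_inv_mul_cancel_right _ _ hB, add_sub_cancel]

end Matrix

theorem dual_frame_completion_unique_indirect_general
    {𝕜 : Type*} [RCLike 𝕜] {n m : ℕ}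
    (F : Matrix (Fin n) (Fin m ⊕ Fin n) 𝕜)
    (P : Matrix (Fin n ⊕ Fin m) (Fin m ⊕ Fin n) 𝕜)
    (Q : Matrix (Fin m ⊕ Fin n) (Fin n ⊕ Fin m) 𝕜)
    (hQP : Q * P = 1)
    (hP : P * Fᴴ = fromRows (1 : Matrix (Fin n) (Fin n) 𝕜) (0 : Matrix (Fin m) (Fin n) 𝕜))
    (hP21 : IsUnit (P.toBlocks₂₁).det)
    (H : Matrix (Fin n) (Fin m) 𝕜) :
    (∃! G : Matrix (Fin n) (Fin m ⊕ Fin n) 𝕜,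
        F * Gᴴ = 1 ∧ ∀ i j, G i (Sum.inl j) = H i j) ∧
    (F * (fromCols (1 : Matrix (Fin n) (Fin n) 𝕜)
          ((H - P.toBlocks₁₁) * (P.toBlocks₂₁)⁻¹) * P)ᴴ = 1 ∧
      ∀ i j, (fromCols (1 : Matrix (Fin n) (Fin n) 𝕜)
          ((H - P.toBlocks₁₁) * (P.toBlocks₂₁)⁻¹) * P) i (Sum.inl j) = H i j) := by
  have hcols (A : Matrix (Fin n) (Fin m) 𝕜) :
      (∀ i j, (fromCols (1 : Matrix (Fin n) (Fin n) 𝕜) A * P) i (Sum.inl j) = H i j) ↔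
        A = (H - P.toBlocks₁₁) * (P.toBlocks₂₁)⁻¹ := by
    rw [← add_mul_eq_iff_eq_sub_mul_inv hP21, ← Matrix.one_mul P.toBlocks₁₁,
      ← toCols₁_fromCols_mul_s11, Matrix.ext_iff.symm]
    rfl
  have hdual := mul_conjTranspose_eq_one_iff hQP hP
  set G₀ := fromCols (1 : Matrix (Fin n) (Fin n) 𝕜) ((H - P.toBlocks₁₁) * P.toBlocks₂₁⁻¹) * P
  have hG₀ : F * G₀ᴴ = 1 ∧ ∀ i j, G₀ i (Sum.inl j) = H i j :=
    ⟨(hdual _).2 ⟨_, rfl⟩, (hcols _).2 rfl⟩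
  refine ⟨⟨_, hG₀, ?_⟩, hG₀⟩
  rintro G ⟨hG, hGH⟩
  obtain ⟨A, rfl⟩ := (hdual G).1 hG
  rw [(hcols A).1 hGH]

/-- If `s = k - n` and the bottom-left block `P₂₁` of `P` is invertible, the dual frame
completion is unique, given by `G = [1 A] P` with `A = (H - P₁₁) P₂₁⁻¹`. -/
theorem dual_frame_completion_unique_indirect
    {𝕜 : Type*} [RCLike 𝕜] {n m : ℕ}
    (F : Matrix (Fin n) (Fin m ⊕ Fin n) 𝕜)
    (hF : F.rank = n)
    (P : Matrix (Fin n ⊕ Fin m) (Fin m ⊕ Fin n) 𝕜)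
    (Q : Matrix (Fin m ⊕ Fin n) (Fin n ⊕ Fin m) 𝕜)
    (hPQ : P * Q = 1) (hQP : Q * P = 1)
    (hP : P * Fᴴ = fromRows (1 : Matrix (Fin n) (Fin n) 𝕜) (0 : Matrix (Fin m) (Fin n) 𝕜))
    (hP21 : IsUnit (P.toBlocks₂₁).det)
    (H : Matrix (Fin n) (Fin m) 𝕜) :
    (∃! G : Matrix (Fin n) (Fin m ⊕ Fin n) 𝕜,
        F * Gᴴ = 1 ∧ ∀ i j, G i (Sum.inl j) = H i j) ∧
    (F * (fromCols (1 : Matrix (Fin n) (Fin n) 𝕜)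
          ((H - P.toBlocks₁₁) * (P.toBlocks₂₁)⁻¹) * P)ᴴ = 1 ∧
      ∀ i j, (fromCols (1 : Matrix (Fin n) (Fin n) 𝕜)
          ((H - P.toBlocks₁₁) * (P.toBlocks₂₁)⁻¹) * P) i (Sum.inl j) = H i j) :=
  dual_frame_completion_unique_indirect_general F P Q hQP hP hP21 H
end

section
/- Let F be an n×k full-row-rank matrix and P invertible k×k with P F* = [I_n; 0]. Partition P = [P₁ P₂] with P₁ of size k×s. Let H be an n×s matrix, W = diag(w₁,…,w_s,1,…,1) a k×k diagonal matrix with nonzero w_i, and W_H = diag(w₁,…,w_s). Then there exist g_{s+1},…,g_k ∈ 𝔽ⁿ such that GW is a dual frame for F, where G = [H g_{s+1} … g_k], if and only if there exists an n×(k−n) matrix A with H = [I_n A] P₁ W_H⁻¹. -/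
/-!
Since `Q` is a left inverse of `P`, every `X` factors as `X = (X Q) P`, and `P Fᴴ = [1; 0]` turns
`X Fᴴ = 1` into the statement that the first `n` columns of `X Q` form the identity. So the dual
frames of `F` are exactly the matrices `[1 A] P`. For `X = [H G'] W = [H W_H, G']` the block `G'`
is free, so a completion exists iff `H W_H` is the first block `[1 A] P₁` of such a dual frame.
-/

open Matrix

namespace Matrix

variable {R : Type*} {l m n n₁ n₂ : Type*}

lemma toCols₁_mul [Semiring R] [Fintype m] (B : Matrix l m R) (P : Matrix m (n₁ ⊕ n₂) R) :
    (B * P).toCols₁ = B * P.toCols₁ := by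
  ext i j
  simp [toCols₁, mul_apply]

lemma exists_fromCols_eq_iff (A₁ : Matrix l n₁ R) (X : Matrix l (n₁ ⊕ n₂) R) :
    (∃ A₂, fromCols A₁ A₂ = X) ↔ A₁ = X.toCols₁ :=
  ⟨fun ⟨_, h⟩ => h ▸ (toCols₁_fromCols _ _).symm,
    fun h => ⟨X.toCols₂, h ▸ fromCols_toCols X⟩⟩

lemma fromCols_mul_diagonal_sumElim [Semiring R] [Fintype n₁] [Fintype n₂]
    [DecidableEq n₁] [DecidableEq n₂]
    (A₁ : Matrix l n₁ R) (A₂ : Matrix l n₂ R) (d₁ : n₁ → R) (d₂ : n₂ → R) :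
    fromCols A₁ A₂ * diagonal (Sum.elim d₁ d₂) =
      fromCols (A₁ * diagonal d₁) (A₂ * diagonal d₂) := by
  ext i (j | j) <;> simp [mul_diagonal]

variable [Fintype l] [Fintype m] [Fintype n] [DecidableEq l] [DecidableEq n]

lemma mul_eq_one_iff_exists_eq_fromCols_one_mul [Semiring R]
    {P : Matrix (n ⊕ m) l R} {Q : Matrix l (n ⊕ m) R} {B : Matrix l n R}
    (hQP : Q * P = 1) (hPB : P * B = fromRows 1 0) (X : Matrix n l R) :
    X * B = 1 ↔ ∃ A : Matrix n m R, X = fromCols (1 : Matrix n n R) A * P := by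
  constructor
  · intro hXB
    have hX : X = X * Q * P := by rw [Matrix.mul_assoc, hQP, Matrix.mul_one]
    have hXQ : (X * Q).toCols₁ = 1 := by
      rw [← hXB]
      conv_rhs => rw [hX, Matrix.mul_assoc, hPB, ← fromCols_toCols (X * Q), fromCols_mul_fromRows]
      simp
    exact ⟨(X * Q).toCols₂, by rw [← hXQ, fromCols_toCols, ← hX]⟩
  · rintro ⟨A, rfl⟩
    simp [Matrix.mul_assoc, hPB, fromCols_mul_fromRows]

lemma mul_conjTranspose_eq_one_iff_exists_eq_fromCols_one_mul [Semiring R] [StarRing R]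
    {F : Matrix n l R} {P : Matrix (n ⊕ m) l R} {Q : Matrix l (n ⊕ m) R}
    (hQP : Q * P = 1) (hPF : P * Fᴴ = fromRows 1 0) (X : Matrix n l R) :
    F * Xᴴ = 1 ↔ ∃ A : Matrix n m R, X = fromCols (1 : Matrix n n R) A * P := by
  rw [← conjTranspose_inj, conjTranspose_mul, conjTranspose_conjTranspose, conjTranspose_one]
  exact mul_eq_one_iff_exists_eq_fromCols_one_mul hQP hPF X

end Matrix

theorem scaled_dual_frame_completion_indirect_general
    {𝕜 : Type*} [RCLike 𝕜] {n m s t : ℕ}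
    (F : Matrix (Fin n) (Fin s ⊕ Fin t) 𝕜)
    (P : Matrix (Fin n ⊕ Fin m) (Fin s ⊕ Fin t) 𝕜)
    (Q : Matrix (Fin s ⊕ Fin t) (Fin n ⊕ Fin m) 𝕜)
    (hQP : Q * P = 1)
    (hP : P * Fᴴ = fromRows (1 : Matrix (Fin n) (Fin n) 𝕜) (0 : Matrix (Fin m) (Fin n) 𝕜))
    (w : Fin s → 𝕜) (hw : ∀ i, w i ≠ 0)
    (H : Matrix (Fin n) (Fin s) 𝕜) :
    (∃ G' : Matrix (Fin n) (Fin t) 𝕜,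
        F * (fromCols H G' * Matrix.diagonal (Sum.elim w fun _ => (1 : 𝕜)))ᴴ = 1) ↔
      ∃ A : Matrix (Fin n) (Fin m) 𝕜,
        H = fromCols (1 : Matrix (Fin n) (Fin n) 𝕜) A *
          (P.submatrix id Sum.inl) * (Matrix.diagonal w)⁻¹ := by
  have : Invertible (diagonal w) :=
    (isUnit_diagonal.mpr (Pi.isUnit_iff.mpr fun i => (hw i).isUnit)).invertible
  -- The dimensions in the statement are unresolved when `*` is elaborated, so it picks the default
  -- `HMul` instance of `CStarMatrix`; `show` restates the goal with matrix multiplication.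
  show (∃ G', F * (fromCols H G' * diagonal (Sum.elim w fun _ : Fin t => (1 : 𝕜)))ᴴ = 1) ↔ _
  calc _ ↔ ∃ G', ∃ A : Matrix (Fin n) (Fin m) 𝕜,
        fromCols (H * diagonal w) G' = fromCols (1 : Matrix (Fin n) (Fin n) 𝕜) A * P := by
        simp_rw [mul_conjTranspose_eq_one_iff_exists_eq_fromCols_one_mul hQP hP,
          fromCols_mul_diagonal_sumElim, diagonal_one, Matrix.mul_one]
    _ ↔ ∃ A : Matrix (Fin n) (Fin m) 𝕜,
        H * diagonal w = fromCols (1 : Matrix (Fin n) (Fin n) 𝕜) A * P.submatrix id Sum.inl := by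
        rw [exists_comm]
        simp_rw [exists_fromCols_eq_iff, toCols₁_mul]
        rfl
    _ ↔ _ := exists_congr fun A => by
        rw [eq_comm (a := H), mul_inv_eq_iff_eq_mul_of_invertible, eq_comm]

/-- Scaled dual frame completion: `[H G'] W` is a dual frame for `F` for some `G'` iff
`H = [1 A] P₁ W_H⁻¹` for some `A`, where `P₁` is the left `k×s` block of `P` and
`W = diag(w₁,…,w_s,1,…,1)`, `W_H = diag(w₁,…,w_s)`. -/
theorem scaled_dual_frame_completion_indirect
    {𝕜 : Type*} [RCLike 𝕜] {n m s t : ℕ}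
    (F : Matrix (Fin n) (Fin s ⊕ Fin t) 𝕜)
    (hF : F.rank = n)
    (P : Matrix (Fin n ⊕ Fin m) (Fin s ⊕ Fin t) 𝕜)
    (Q : Matrix (Fin s ⊕ Fin t) (Fin n ⊕ Fin m) 𝕜)
    (hPQ : P * Q = 1) (hQP : Q * P = 1)
    (hP : P * Fᴴ = fromRows (1 : Matrix (Fin n) (Fin n) 𝕜) (0 : Matrix (Fin m) (Fin n) 𝕜))
    (w : Fin s → 𝕜) (hw : ∀ i, w i ≠ 0)
    (H : Matrix (Fin n) (Fin s) 𝕜) :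
    (∃ G' : Matrix (Fin n) (Fin t) 𝕜,
        F * (fromCols H G' * Matrix.diagonal (Sum.elim w fun _ => (1 : 𝕜)))ᴴ = 1) ↔
      ∃ A : Matrix (Fin n) (Fin m) 𝕜,
        H = fromCols (1 : Matrix (Fin n) (Fin n) 𝕜) A *
          (P.submatrix id Sum.inl) * (Matrix.diagonal w)⁻¹ :=
  scaled_dual_frame_completion_indirect_general F P Q hQP hP w hw H
end

section
/- Let F = UΣV* be the SVD of an n×k full-row-rank matrix F, Σ = [D 0], D = diag(σ₁,…,σ_n), σ_i > 0. Partition V* into blocks V*_{n×s} (top-left n×s), V*_{(k−n)×s} (bottom-left (k−n)×s). Given an n×s matrix H with s ≤ k, there exists a dual frame G of F whose first s columns equal H if and only if every column of H*U − (V*_{n×s})* (D⁻¹)* lies in the column span of (V*_{(k−n)×s})*. -/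
/-!
Conjugating by the unitaries, `F K = 1` becomes `[D 0] W = 1` for `W = V* K U`: this pins the
top block of `W` to `D⁻¹` and leaves its bottom block `Y` free, so the right inverses of `F` are
exactly the matrices `V [D⁻¹; Y] U*`. For `K = G*` the prescribed columns of `G` are the first
`s` rows of `K`. Splitting the first `s` rows of `V` as `[V₁₁ V₁₂]`, this is the linear
equation `V₁₂ Y = H* U - V₁₁ D⁻¹` in `Y`, solvable iff every column of the right-hand side lies
in the column span of `V₁₂`.
-/

open Matrix

namespace Matrix

variable {R l m n p : Type*}

theorem exists_mul_eq_iff_forall_mem_span [CommSemiring R] [Fintype n]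
    (B : Matrix m n R) (M : Matrix m p R) :
    (∃ X : Matrix n p R, B * X = M) ↔
      ∀ j, (fun i => M i j) ∈ Submodule.span R (Set.range fun c => fun i => B i c) := by
  simp only [Submodule.mem_span_range_iff_exists_fun]
  constructor
  · rintro ⟨X, rfl⟩ j
    exact ⟨fun c => X c j, by ext i; simp [mul_apply, mul_comm]⟩
  · intro h
    choose X hX using h
    exact ⟨of fun c j => X j c, by ext i j; simpa [mul_apply, mul_comm] using congrFun (hX j) i⟩

theorem toRows₁_mul [NonUnitalNonAssocSemiring R] [Fintype n] (A : Matrix (l ⊕ m) n R)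
    (B : Matrix n p R) : toRows₁ (A * B) = toRows₁ A * B :=
  rfl

theorem toRows₁_conjTranspose [Star R] (A : Matrix m (l ⊕ n) R) :
    toRows₁ Aᴴ = (toCols₁ A)ᴴ :=
  rfl

theorem toRows₁_eq_fromCols_conjTranspose_toBlocks [InvolutiveStar R]
    (V : Matrix (l ⊕ m) (n ⊕ p) R) :
    toRows₁ V = fromCols (Vᴴ.toBlocks₁₁)ᴴ (Vᴴ.toBlocks₂₁)ᴴ := by
  ext i (j | j) <;> simp [toBlocks₁₁, toBlocks₂₁]

section Unitary

variable [CommRing R] [StarRing R] [Fintype n] [DecidableEq n] {U : Matrix n n R}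

theorem mul_conjTranspose_eq_iff (hU : Uᴴ * U = 1 ∧ U * Uᴴ = 1) {M N : Matrix m n R} :
    M * Uᴴ = N ↔ M = N * U := by
  constructor
  · rintro rfl
    rw [Matrix.mul_assoc, hU.1, Matrix.mul_one]
  · rintro rfl
    rw [Matrix.mul_assoc, hU.2, Matrix.mul_one]

variable [Fintype l] [DecidableEq l] [Fintype m] [DecidableEq m] {V : Matrix l (n ⊕ m) R}
  {D D' : Matrix n n R}

theorem svd_mul_eq_one_iff (hU : Uᴴ * U = 1 ∧ U * Uᴴ = 1) (hV : Vᴴ * V = 1 ∧ V * Vᴴ = 1)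
    (hD : D * D' = 1) (K : Matrix l n R) :
    U * fromCols D (0 : Matrix n m R) * Vᴴ * K = 1 ↔
      ∃ Y : Matrix m n R, V * fromRows D' Y * Uᴴ = K := by
  constructor
  · intro hK
    set W := Vᴴ * K * U with hW
    have hDW : D * toRows₁ W = 1 := by
      calc D * toRows₁ W = fromCols D (0 : Matrix n m R) * W := by
            conv_rhs => rw [← fromRows_toRows W, fromCols_mul_fromRows]
            rw [Matrix.zero_mul, add_zero]
        _ = Uᴴ * (U * fromCols D (0 : Matrix n m R) * Vᴴ * K) * U := by
            simp only [hW, Matrix.mul_assoc]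
            rw [← Matrix.mul_assoc Uᴴ U, hU.1, Matrix.one_mul]
        _ = 1 := by rw [hK, Matrix.mul_one, hU.1]
    have hW₁ : toRows₁ W = D' := by
      calc toRows₁ W = D' * D * toRows₁ W := by rw [mul_eq_one_comm.mp hD, Matrix.one_mul]
        _ = D' := by rw [Matrix.mul_assoc, hDW, Matrix.mul_one]
    refine ⟨toRows₂ W, ?_⟩
    rw [← hW₁, fromRows_toRows, hW, ← Matrix.mul_assoc V, ← Matrix.mul_assoc V, hV.2,
      Matrix.one_mul, Matrix.mul_assoc, hU.2, Matrix.mul_one]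
  · rintro ⟨Y, rfl⟩
    calc U * fromCols D (0 : Matrix n m R) * Vᴴ * (V * fromRows D' Y * Uᴴ)
        = U * (fromCols D (0 : Matrix n m R) * (Vᴴ * V) * fromRows D' Y) * Uᴴ := by
          simp only [Matrix.mul_assoc]
      _ = 1 := by
          rw [hV.1, Matrix.mul_one, fromCols_mul_fromRows, hD, Matrix.zero_mul, add_zero,
            Matrix.mul_one, hU.2]

end Unitary

end Matrix

theorem dual_frame_completion_svd_general
    {n m s t : ℕ}
    (F : Matrix (Fin n) (Fin s ⊕ Fin t) ℂ)
    (U : Matrix (Fin n) (Fin n) ℂ)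
    (V : Matrix (Fin s ⊕ Fin t) (Fin n ⊕ Fin m) ℂ)
    (hU : Uᴴ * U = 1 ∧ U * Uᴴ = 1)
    (hV : Vᴴ * V = 1 ∧ V * Vᴴ = 1)
    (σ : Fin n → ℝ) (hσ : ∀ i, 0 < σ i)
    (hSVD : F = U * fromCols (Matrix.diagonal fun i => (σ i : ℂ))
        (0 : Matrix (Fin n) (Fin m) ℂ) * Vᴴ)
    (H : Matrix (Fin n) (Fin s) ℂ) :
    (∃ G : Matrix (Fin n) (Fin s ⊕ Fin t) ℂ,
        F * Gᴴ = 1 ∧ ∀ i j, G i (Sum.inl j) = H i j) ↔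
      ∀ j : Fin n,
        (fun i => (Hᴴ * U -
            ((Vᴴ.toBlocks₁₁)ᴴ) * ((Matrix.diagonal fun i => ((σ i : ℂ))⁻¹)ᴴ)) i j) ∈
          Submodule.span ℂ (Set.range fun c => (fun i => ((Vᴴ.toBlocks₂₁)ᴴ) i c)) := by
  set E := (diagonal fun i => ((σ i : ℂ))⁻¹)ᴴ
  have hDE : diagonal (fun i => (σ i : ℂ)) * E = 1 := by
    simp [E, diagonal_conjTranspose, (hσ _).ne']
  have hcols (G : Matrix (Fin n) (Fin s ⊕ Fin t) ℂ) :
      (∀ i j, G i (Sum.inl j) = H i j) ↔ toRows₁ Gᴴ = Hᴴ := by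
    rw [toRows₁_conjTranspose, conjTranspose_inj, ← Matrix.ext_iff]; rfl
  rw [← exists_mul_eq_iff_forall_mem_span]
  calc _ ↔ ∃ K : Matrix (Fin s ⊕ Fin t) (Fin n) ℂ, F * K = 1 ∧ toRows₁ K = Hᴴ := by
        simp_rw [hcols]
        exact ⟨fun ⟨G, hG⟩ => ⟨Gᴴ, hG⟩, fun ⟨K, hK⟩ => ⟨Kᴴ, by rwa [conjTranspose_conjTranspose]⟩⟩
    _ ↔ ∃ Y : Matrix (Fin m) (Fin n) ℂ, toRows₁ (V * fromRows E Y * Uᴴ) = Hᴴ := by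
        simp_rw [hSVD, svd_mul_eq_one_iff hU hV hDE, exists_exists_eq_and]
    _ ↔ _ := by
        simp_rw [toRows₁_mul, toRows₁_eq_fromCols_conjTranspose_toBlocks V, fromCols_mul_fromRows,
          mul_conjTranspose_eq_iff hU, eq_sub_iff_add_eq']

/-- SVD approach to dual frame completion: there exists a dual frame `G` of `F` whose
first `s` columns equal `H` iff every column of `Hᴴ U - (Vᴴ₁₁)ᴴ (D⁻¹)ᴴ` lies in the
column span of `(Vᴴ₂₁)ᴴ`. -/
theorem dual_frame_completion_svd
    {n m s t : ℕ}
    (F : Matrix (Fin n) (Fin s ⊕ Fin t) ℂ)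
    (hF : F.rank = n)
    (U : Matrix (Fin n) (Fin n) ℂ)
    (V : Matrix (Fin s ⊕ Fin t) (Fin n ⊕ Fin m) ℂ)
    (hU : Uᴴ * U = 1 ∧ U * Uᴴ = 1)
    (hV : Vᴴ * V = 1 ∧ V * Vᴴ = 1)
    (σ : Fin n → ℝ) (hσ : ∀ i, 0 < σ i)
    (hSVD : F = U * fromCols (Matrix.diagonal fun i => (σ i : ℂ))
        (0 : Matrix (Fin n) (Fin m) ℂ) * Vᴴ)
    (H : Matrix (Fin n) (Fin s) ℂ) :
    (∃ G : Matrix (Fin n) (Fin s ⊕ Fin t) ℂ,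
        F * Gᴴ = 1 ∧ ∀ i j, G i (Sum.inl j) = H i j) ↔
      ∀ j : Fin n,
        (fun i => (Hᴴ * U -
            ((Vᴴ.toBlocks₁₁)ᴴ) * ((Matrix.diagonal fun i => ((σ i : ℂ))⁻¹)ᴴ)) i j) ∈
          Submodule.span ℂ (Set.range fun c => (fun i => ((Vᴴ.toBlocks₂₁)ᴴ) i c)) :=
  dual_frame_completion_svd_general F U V hU hV σ hσ hSVD H
end
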